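/- Let n ≥ 3 be an integer, ω₀ > 1, v̄ > 0, and let F : [0, v̄] → ℝ be twice continuously differentiable with F(0) = 0, F(v̄) = 1, density f = F' satisfying f(v) > 0 and f'(v) ≤ 0 for all v ∈ [0, v̄] (so F is concave). Then the function J̃_F(v) = Σ_{m=0}^{n−1} binom(n−1, m) · ln(m+ω₀) · F(v)^m · (1 − F(v))^{n−1−m} is strictly concave on [0, v̄]: J̃_F''(v) < 0 for all v ∈ [0, v̄]. -/

import Mathlib

/-!
Write `J̃_F = B ∘ F`, where `B(x) = Σ C(n-1,m) log(m+ω₀) x^m (1-x)^(n-1-m)` is the Bernstein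
polynomial with coefficients `log (m + ω₀)`. Differentiating a Bernstein polynomial of degree `k+1`
gives `k+1` times the Bernstein polynomial of degree `k` of the forward differences of its
coefficients, and a Bernstein polynomial with positive coefficients is positive on `[0, 1]`.
As `B` has degree `n - 1 ≥ 2`, `B'` and `B''` are positive multiples of the Bernstein polynomials
of the first and second differences of `log (m + ω₀)`; since `log` is increasing and strictly
concave, `B' > 0` and `B'' < 0` on `[0, 1]`. As `F` maps `[0, v̄]` into `[0, 1]`, the chain rule
gives `J̃_F'' = B''(F) f² + B'(F) f' < 0`.
-/

open Real Finset

/-- Expected social-network benefit at threshold `v` when valuations are i.i.d.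
with CDF `F`: `J̃_F(v) = Σ_{m=0}^{n−1} C(n−1,m)·ln(m+ω₀)·F(v)^m·(1−F(v))^{n−1−m}`. -/
noncomputable def JF (n : ℕ) (ω₀ : ℝ) (F : ℝ → ℝ) (v : ℝ) : ℝ :=
  ∑ m ∈ Finset.range n, (Nat.choose (n - 1) m : ℝ) * Real.log ((m : ℝ) + ω₀) *
    (F v) ^ m * (1 - F v) ^ (n - 1 - m)

open Polynomial
open scoped fwdDiff

noncomputable def bernsteinSum (k : ℕ) (b : ℕ → ℝ) : ℝ[X] :=
  ∑ m ∈ range (k + 1), C (b m) * bernsteinPolynomial ℝ k m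

lemma bernsteinSum_neg (k : ℕ) (b : ℕ → ℝ) :
    bernsteinSum k (fun m => -b m) = -bernsteinSum k b := by
  simp only [bernsteinSum, C_neg, neg_mul, sum_neg_distrib]

lemma eval_bernsteinSum (k : ℕ) (b : ℕ → ℝ) (x : ℝ) :
    (bernsteinSum k b).eval x =
      ∑ m ∈ range (k + 1), (k.choose m : ℝ) * b m * x ^ m * (1 - x) ^ (k - m) := by
  simp only [bernsteinSum, bernsteinPolynomial, eval_finsetSum, eval_mul, eval_C, eval_natCast,
    eval_pow, eval_X, eval_sub, eval_one]
  exact sum_congr rfl fun m _ => by ring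

lemma derivative_bernsteinSum (k : ℕ) (b : ℕ → ℝ) :
    derivative (bernsteinSum (k + 1) b) =
      (k + 1 : ℝ[X]) * bernsteinSum k (Δ_[1] b) := by
  have shift : ∑ m ∈ range (k + 1), C (b (m + 1)) * bernsteinPolynomial ℝ k (m + 1)
      + C (b 0) * bernsteinPolynomial ℝ k 0
      = ∑ m ∈ range (k + 1), C (b m) * bernsteinPolynomial ℝ k m := by
    rw [← sum_range_succ' (fun m => C (b m) * bernsteinPolynomial ℝ k m), sum_range_succ,
      bernsteinPolynomial.eq_zero_of_lt ℝ (lt_add_one k), mul_zero, add_zero]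
  simp only [bernsteinSum, fwdDiff, derivative_sum, derivative_C_mul]
  rw [sum_range_succ']
  simp only [bernsteinPolynomial.derivative_succ, bernsteinPolynomial.derivative_zero,
    Nat.add_sub_cancel, C_sub, sub_mul, sum_sub_distrib, mul_sub, mul_left_comm (C _), ← mul_sum]
  rw [← shift]
  push_cast
  ring

lemma eval_bernsteinSum_pos {k : ℕ} {b : ℕ → ℝ} (hb : ∀ m ≤ k, 0 < b m) {x : ℝ}
    (hx : x ∈ Set.Icc (0 : ℝ) 1) : 0 < (bernsteinSum k b).eval x := by
  have hB : ∀ m, 0 ≤ (bernsteinPolynomial ℝ k m).eval x := fun m => by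
    simp only [bernsteinPolynomial, eval_mul, eval_natCast, eval_pow, eval_X, eval_sub, eval_one]
    exact mul_nonneg (mul_nonneg (Nat.cast_nonneg _) (pow_nonneg hx.1 _))
      (pow_nonneg (sub_nonneg.2 hx.2) _)
  have hsum : ∑ m ∈ range (k + 1), (bernsteinPolynomial ℝ k m).eval x = 1 := by
    rw [← eval_finsetSum, bernsteinPolynomial.sum, eval_one]
  obtain ⟨m, hm, hpos⟩ : ∃ m ∈ range (k + 1), 0 < (bernsteinPolynomial ℝ k m).eval x :=
    (sum_pos_iff_of_nonneg fun m _ => hB m).1 (hsum ▸ one_pos)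
  have hmk : m ≤ k := Nat.lt_succ_iff.1 (mem_range.1 hm)
  simp only [bernsteinSum, eval_finsetSum, eval_mul, eval_C]
  exact sum_pos' (fun i hi => mul_nonneg (hb i (Nat.lt_succ_iff.1 (mem_range.1 hi))).le (hB i))
    ⟨m, hm, mul_pos (hb m hmk) hpos⟩

lemma eval_bernsteinSum_neg {k : ℕ} {b : ℕ → ℝ} (hb : ∀ m ≤ k, b m < 0) {x : ℝ}
    (hx : x ∈ Set.Icc (0 : ℝ) 1) : (bernsteinSum k b).eval x < 0 := by
  have := eval_bernsteinSum_pos (b := fun m => -b m) (fun m hm => neg_pos.2 (hb m hm)) hx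
  rwa [bernsteinSum_neg, eval_neg, neg_pos] at this

lemma eval_derivative_bernsteinSum_pos {k : ℕ} {b : ℕ → ℝ} (hb : ∀ m ≤ k, 0 < Δ_[1] b m)
    {x : ℝ} (hx : x ∈ Set.Icc (0 : ℝ) 1) : 0 < (derivative (bernsteinSum (k + 1) b)).eval x := by
  rw [derivative_bernsteinSum, eval_mul]
  exact mul_pos (by simp only [eval_add, eval_natCast, eval_one]; positivity)
    (eval_bernsteinSum_pos hb hx)

lemma eval_derivative_derivative_bernsteinSum_neg {k : ℕ} {b : ℕ → ℝ}
    (hb : ∀ m ≤ k, Δ_[1] (Δ_[1] b) m < 0) {x : ℝ} (hx : x ∈ Set.Icc (0 : ℝ) 1) :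
    (derivative (derivative (bernsteinSum (k + 2) b))).eval x < 0 := by
  rw [derivative_bernsteinSum, derivative_mul, derivative_bernsteinSum]
  simp only [derivative_add, derivative_natCast, derivative_one, add_zero, zero_mul, zero_add,
    eval_mul, eval_add, eval_natCast, eval_one]
  exact mul_neg_of_pos_of_neg (by positivity)
    (mul_neg_of_pos_of_neg (by positivity) (eval_bernsteinSum_neg hb hx))

lemma fwdDiff_log_add_pos {ω₀ : ℝ} (hω : 0 < ω₀) (m : ℕ) :
    0 < Δ_[1] (fun m : ℕ => log (m + ω₀)) m := by
  simp only [fwdDiff, Nat.cast_add, Nat.cast_one, sub_pos]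
  exact log_lt_log (by positivity) (by linarith)

lemma fwdDiff_fwdDiff_log_add_neg {ω₀ : ℝ} (hω : 0 < ω₀) (m : ℕ) :
    Δ_[1] (Δ_[1] (fun m : ℕ => log (m + ω₀))) m < 0 := by
  set t : ℝ := m + ω₀
  have ht : 0 < t := by positivity
  -- `t (t + 2) < (t + 1) ^ 2`
  have key : log (t + 2) + log t < 2 * log (t + 1) := by
    rw [← log_mul (by positivity) ht.ne', ← log_rpow (by positivity)]
    exact log_lt_log (by positivity) (by norm_num; nlinarith)
  simp only [fwdDiff, Nat.cast_add, Nat.cast_one]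
  have e1 : (m : ℝ) + 1 + 1 + ω₀ = t + 2 := by ring
  have e2 : (m : ℝ) + 1 + ω₀ = t + 1 := by ring
  rw [e1, e2]
  linarith

lemma JF_eq_eval_bernsteinSum (k : ℕ) (ω₀ : ℝ) (F : ℝ → ℝ) (v : ℝ) :
    JF (k + 1) ω₀ F v = (bernsteinSum k (fun m => log (m + ω₀))).eval (F v) := by
  rw [eval_bernsteinSum, JF, Nat.add_sub_cancel]

lemma mapsTo_Icc_of_hasDerivAt_nonneg {F f : ℝ → ℝ} {a b : ℝ}
    (hF : ∀ x ∈ Set.Icc a b, HasDerivAt F (f x) x) (hf : ∀ x ∈ Set.Icc a b, 0 ≤ f x) :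
    Set.MapsTo F (Set.Icc a b) (Set.Icc (F a) (F b)) :=
  (monotoneOn_of_hasDerivWithinAt_nonneg (convex_Icc a b)
    (fun x hx => (hF x hx).continuousAt.continuousWithinAt)
    (fun x hx => (hF x (interior_subset hx)).hasDerivWithinAt)
    (fun x hx => hf x (interior_subset hx))).mapsTo_Icc

lemma strictConcaveOn_Icc_of_hasDerivAt {J J' J'' : ℝ → ℝ} {a b : ℝ}
    (hJ : ∀ x ∈ Set.Icc a b, HasDerivAt J (J' x) x)
    (hJ' : ∀ x ∈ Set.Ioo a b, HasDerivAt J' (J'' x) x) (hJ'' : ∀ x ∈ Set.Ioo a b, J'' x < 0) :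
    StrictConcaveOn ℝ (Set.Icc a b) J := by
  refine strictConcaveOn_of_deriv2_neg (convex_Icc a b)
    (fun x hx => (hJ x hx).continuousAt.continuousWithinAt) fun x hx => ?_
  rw [interior_Icc] at hx
  have hderiv : deriv J =ᶠ[nhds x] J' := Filter.eventually_of_mem (Ioo_mem_nhds hx.1 hx.2)
    fun y hy => (hJ y (Set.Ioo_subset_Icc_self hy)).deriv
  rw [Function.iterate_succ_apply, Function.iterate_one, hderiv.deriv_eq, (hJ' x hx).deriv]
  exact hJ'' x hx

lemma HasDerivAt.unique_of_eqOn_Icc {f g : ℝ → ℝ} {f' g' a b x : ℝ} (hab : a < b)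
    (hfg : Set.EqOn f g (Set.Icc a b)) (hx : x ∈ Set.Icc a b) (hf : HasDerivAt f f' x)
    (hg : HasDerivAt g g' x) : f' = g' :=
  (uniqueDiffOn_Icc hab x hx).eq_deriv _ (hf.hasDerivWithinAt.congr (hfg.symm) (hfg hx).symm)
    hg.hasDerivWithinAt

theorem stmt19_general (n : ℕ) (hn : 3 ≤ n) (ω₀ vbar : ℝ) (hω : 1 < ω₀) (hv : 0 < vbar)
    (F f f' : ℝ → ℝ)
    (hF0 : F 0 = 0) (hF1 : F vbar = 1)
    (hF : ∀ v ∈ Set.Icc (0 : ℝ) vbar, HasDerivAt F (f v) v)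
    (hf : ∀ v ∈ Set.Icc (0 : ℝ) vbar, HasDerivAt f (f' v) v)
    (hfpos : ∀ v ∈ Set.Icc (0 : ℝ) vbar, 0 < f v)
    (hf'le : ∀ v ∈ Set.Icc (0 : ℝ) vbar, f' v ≤ 0) :
    StrictConcaveOn ℝ (Set.Icc 0 vbar) (JF n ω₀ F) ∧
    ∀ g h : ℝ → ℝ,
      (∀ v ∈ Set.Icc (0 : ℝ) vbar, HasDerivAt (JF n ω₀ F) (g v) v) →
      (∀ v ∈ Set.Icc (0 : ℝ) vbar, HasDerivAt g (h v) v) →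
      ∀ v ∈ Set.Icc (0 : ℝ) vbar, h v < 0 := by
  obtain ⟨k, rfl⟩ : ∃ k, n = k + 3 := ⟨n - 3, by omega⟩
  set P := bernsteinSum (k + 2) (fun m => log (m + ω₀))
  have hω₀ : 0 < ω₀ := by linarith
  have hFI : Set.MapsTo F (Set.Icc 0 vbar) (Set.Icc 0 1) := by
    simpa only [hF0, hF1] using mapsTo_Icc_of_hasDerivAt_nonneg hF fun w hw => (hfpos w hw).le
  set J' := fun v => (derivative P).eval (F v) * f v
  set J'' := fun v => (derivative (derivative P)).eval (F v) * f v * f v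
    + (derivative P).eval (F v) * f' v
  have hJ : ∀ v ∈ Set.Icc 0 vbar, HasDerivAt (JF (k + 3) ω₀ F) (J' v) v := fun w hw => by
    rw [funext (JF_eq_eval_bernsteinSum (k + 2) ω₀ F)]
    exact (P.hasDerivAt (F w)).comp w (hF w hw)
  have hJ' : ∀ v ∈ Set.Icc 0 vbar, HasDerivAt J' (J'' v) v := fun w hw =>
    (((derivative P).hasDerivAt (F w)).comp w (hF w hw)).mul (hf w hw)
  have hJ'' : ∀ v ∈ Set.Icc 0 vbar, J'' v < 0 := fun w hw => by
    have hP' : 0 < (derivative P).eval (F w) :=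
      eval_derivative_bernsteinSum_pos (fun m _ => fwdDiff_log_add_pos hω₀ m) (hFI hw)
    have hP'' : (derivative (derivative P)).eval (F w) < 0 :=
      eval_derivative_derivative_bernsteinSum_neg
        (fun m _ => fwdDiff_fwdDiff_log_add_neg hω₀ m) (hFI hw)
    have hfw := hfpos w hw
    nlinarith [hf'le w hw, mul_pos hfw hfw]
  refine ⟨strictConcaveOn_Icc_of_hasDerivAt hJ (fun w hw => hJ' w (Set.Ioo_subset_Icc_self hw))
    (fun w hw => hJ'' w (Set.Ioo_subset_Icc_self hw)), fun g h hg hh w hw => ?_⟩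
  have hJ'g : Set.EqOn J' g (Set.Icc 0 vbar) := fun w hw => (hJ w hw).unique (hg w hw)
  rw [← (hJ' w hw).unique_of_eqOn_Icc hv hJ'g hw (hh w hw)]
  exact hJ'' w hw

/-- For a twice continuously differentiable CDF `F` on `[0, v̄]` with positive
non-increasing density `f = F'` (so `F` is concave), the function `J̃_F` is
strictly concave on `[0, v̄]`, with second derivative strictly negative there. -/
theorem stmt19 (n : ℕ) (hn : 3 ≤ n) (ω₀ vbar : ℝ) (hω : 1 < ω₀) (hv : 0 < vbar)
    (F f f' : ℝ → ℝ)
    (hF0 : F 0 = 0) (hF1 : F vbar = 1)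
    (hF : ∀ v ∈ Set.Icc (0 : ℝ) vbar, HasDerivAt F (f v) v)
    (hf : ∀ v ∈ Set.Icc (0 : ℝ) vbar, HasDerivAt f (f' v) v)
    (hf'c : ContinuousOn f' (Set.Icc 0 vbar))
    (hfpos : ∀ v ∈ Set.Icc (0 : ℝ) vbar, 0 < f v)
    (hf'le : ∀ v ∈ Set.Icc (0 : ℝ) vbar, f' v ≤ 0) :
    StrictConcaveOn ℝ (Set.Icc 0 vbar) (JF n ω₀ F) ∧
    ∀ g h : ℝ → ℝ,
      (∀ v ∈ Set.Icc (0 : ℝ) vbar, HasDerivAt (JF n ω₀ F) (g v) v) →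
      (∀ v ∈ Set.Icc (0 : ℝ) vbar, HasDerivAt g (h v) v) →
      ∀ v ∈ Set.Icc (0 : ℝ) vbar, h v < 0 :=
  stmt19_general n hn ω₀ vbar hω hv F f f' hF0 hF1 hF hf hfpos hf'le
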